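/- Let U ⊆ ℝ^(n+2) be open, (ξ, N) a null frame on U, c : U → ℝ differentiable and nowhere zero, and φ : U → ℝ. (1) If the field Z := c • ξ satisfies fderiv ℝ Z p = φ(p) • id for all p ∈ U, then A*_ξ(p)(v) = -(φ(p)/c(p)) • v for every p ∈ U and every screen vector v at p (the null hypersurface is totally umbilical); if moreover φ ≡ 0 then A*_ξ(p)(v) = 0 (totally geodesic). (2) If the field Z := c • N satisfies fderiv ℝ Z p = φ(p) • id for all p ∈ U, then A_N(p)(v) = -(φ(p)/c(p)) • v for every p ∈ U and every screen vector v at p (the screen distribution is totally umbilical); if moreover φ ≡ 0 then A_N(p)(v) = 0 (totally geodesic). (Flat-Minkowski-ambient form of the paper's corollary on closed conformal fields lying in the radical or transversal direction.) -/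

import Mathlib

open scoped BigOperators

noncomputable section

/-- Euclidean space `ℝ^m`. -/
abbrev E (m : ℕ) : Type := EuclideanSpace ℝ (Fin m)

/-- The Minkowski bilinear form `η(x,y) = -(x 0)(y 0) + ∑_{i≥1} (x i)(y i)` on `ℝ^(n+2)`. -/
def eta {n : ℕ} (x y : E (n + 2)) : ℝ :=
  (∑ i, x i * y i) - 2 * (x 0 * y 0)

/-- Screen projection `P_p(w) = w - η(w,N)ξ - η(w,ξ)N` determined by the null frame at a point. -/
def sproj {n : ℕ} (xi N w : E (n + 2)) : E (n + 2) :=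
  w - eta w N • xi - eta w xi • N

/-- Screen shape operator `A*_ξ(p)(v) = -P_p(D_v ξ (p))`. -/
def Astar {n : ℕ} (xi N : E (n + 2) → E (n + 2)) (p v : E (n + 2)) : E (n + 2) :=
  -sproj (xi p) (N p) (fderiv ℝ xi p v)

/-- Shape operator `A_N(p)(v) = -P_p(D_v N (p))`. -/
def AN {n : ℕ} (xi N : E (n + 2) → E (n + 2)) (p v : E (n + 2)) : E (n + 2) :=
  -sproj (xi p) (N p) (fderiv ℝ N p v)

/-- Transversal one-form `τ_p(v) = η(D_v N(p), ξ p)`. -/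
def tau {n : ℕ} (xi N : E (n + 2) → E (n + 2)) (p v : E (n + 2)) : ℝ :=
  eta (fderiv ℝ N p v) (xi p)

/-- Screen part `Z*(p) = P_p(Z p)` of a vector field. -/
def Zstar {n : ℕ} (xi N Z : E (n + 2) → E (n + 2)) (p : E (n + 2)) : E (n + 2) :=
  sproj (xi p) (N p) (Z p)

/-- `A_{Z⊥}(p)(v) = η(Z p, N p) • A*_ξ(p)(v) + η(Z p, ξ p) • A_N(p)(v)`. -/
def AZperp {n : ℕ} (xi N Z : E (n + 2) → E (n + 2)) (p v : E (n + 2)) : E (n + 2) :=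
  eta (Z p) (N p) • Astar xi N p v + eta (Z p) (xi p) • AN xi N p v

/-!
By the Leibniz rule, `φ v = D_v (c X) = c D_v X + (D_v c) X`, so `D_v X = c⁻¹ (φ v - (D_v c) X)`
for `X = ξ` or `X = N`. The screen projection annihilates `ξ` and `N` (the frame is null and
normalised) and fixes every screen vector, hence `-P(D_v X) = -(φ / c) v`.
-/

theorem fderiv_apply_eq_of_fderiv_smul_eq_smul_id {𝕜 F : Type*} [NontriviallyNormedField 𝕜]
    [NormedAddCommGroup F] [NormedSpace 𝕜 F] {c : F → 𝕜} {X : F → F} {p : F} {φ : 𝕜}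
    (hc : DifferentiableAt 𝕜 c p) (hX : DifferentiableAt 𝕜 X p) (hc0 : c p ≠ 0)
    (h : fderiv 𝕜 (fun q => c q • X q) p = φ • ContinuousLinearMap.id 𝕜 F) (v : F) :
    fderiv 𝕜 X p v = (c p)⁻¹ • (φ • v - fderiv 𝕜 c p v • X p) := by
  have leibniz : φ • v = c p • fderiv 𝕜 X p v + fderiv 𝕜 c p v • X p := by
    simpa [h] using congrArg (· v) (fderiv_fun_smul hc hX)
  rw [eq_inv_smul_iff₀ hc0, leibniz, add_sub_cancel_right]

section Minkowski

variable {n : ℕ}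

theorem eta_comm (x y : E (n + 2)) : eta x y = eta y x := by
  simp only [eta, mul_comm]

theorem eta_smul_left (a : ℝ) (x y : E (n + 2)) : eta (a • x) y = a * eta x y := by
  simp only [eta, PiLp.smul_apply, smul_eq_mul, Finset.mul_sum, mul_sub, mul_assoc]
  ring

theorem eta_sub_left (x y z : E (n + 2)) : eta (x - y) z = eta x z - eta y z := by
  simp only [eta, PiLp.sub_apply, sub_mul, Finset.sum_sub_distrib]
  ring

theorem sproj_smul (xi N : E (n + 2)) (a : ℝ) (w : E (n + 2)) :
    sproj xi N (a • w) = a • sproj xi N w := by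
  simp only [sproj, eta_smul_left, smul_sub, mul_smul]

theorem sproj_sub (xi N w₁ w₂ : E (n + 2)) :
    sproj xi N (w₁ - w₂) = sproj xi N w₁ - sproj xi N w₂ := by
  simp only [sproj, eta_sub_left, sub_smul]
  abel

theorem sproj_eq_self {xi N v : E (n + 2)} (hξ : eta v xi = 0) (hN : eta v N = 0) :
    sproj xi N v = v := by
  simp [sproj, hξ, hN]

theorem sproj_left_eq_zero {xi N : E (n + 2)} (hξξ : eta xi xi = 0) (hξN : eta xi N = 1) :
    sproj xi N xi = 0 := by
  simp [sproj, hξξ, hξN]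

theorem sproj_right_eq_zero {xi N : E (n + 2)} (hNN : eta N N = 0) (hξN : eta xi N = 1) :
    sproj xi N N = 0 := by
  simp [sproj, hNN, eta_comm N xi, hξN]

theorem neg_sproj_fderiv_eq_smul_of_fderiv_smul_eq_smul_id {xi N X : E (n + 2) → E (n + 2)}
    {c : E (n + 2) → ℝ} {p v : E (n + 2)} {φ : ℝ}
    (hc : DifferentiableAt ℝ c p) (hX : DifferentiableAt ℝ X p) (hc0 : c p ≠ 0)
    (h : fderiv ℝ (fun q => c q • X q) p = φ • ContinuousLinearMap.id ℝ (E (n + 2)))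
    (hXp : sproj (xi p) (N p) (X p) = 0) (hvξ : eta v (xi p) = 0) (hvN : eta v (N p) = 0) :
    -sproj (xi p) (N p) (fderiv ℝ X p v) = (-(φ / c p)) • v := by
  rw [fderiv_apply_eq_of_fderiv_smul_eq_smul_id hc hX hc0 h, sproj_smul, sproj_sub, sproj_smul,
    sproj_smul, hXp, sproj_eq_self hvξ hvN, smul_zero, sub_zero, smul_smul, neg_smul,
    div_eq_inv_mul, mul_comm]

theorem Astar_eq_smul_of_fderiv_smul_eq_smul_id {ξ N : E (n + 2) → E (n + 2)}
    {c : E (n + 2) → ℝ} {p v : E (n + 2)} {φ : ℝ}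
    (hc : DifferentiableAt ℝ c p) (hξ : DifferentiableAt ℝ ξ p) (hc0 : c p ≠ 0)
    (hξξ : eta (ξ p) (ξ p) = 0) (hξN : eta (ξ p) (N p) = 1)
    (h : fderiv ℝ (fun q => c q • ξ q) p = φ • ContinuousLinearMap.id ℝ (E (n + 2)))
    (hvξ : eta v (ξ p) = 0) (hvN : eta v (N p) = 0) :
    Astar ξ N p v = (-(φ / c p)) • v :=
  neg_sproj_fderiv_eq_smul_of_fderiv_smul_eq_smul_id hc hξ hc0 h
    (sproj_left_eq_zero hξξ hξN) hvξ hvN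

theorem AN_eq_smul_of_fderiv_smul_eq_smul_id {ξ N : E (n + 2) → E (n + 2)}
    {c : E (n + 2) → ℝ} {p v : E (n + 2)} {φ : ℝ}
    (hc : DifferentiableAt ℝ c p) (hN : DifferentiableAt ℝ N p) (hc0 : c p ≠ 0)
    (hNN : eta (N p) (N p) = 0) (hξN : eta (ξ p) (N p) = 1)
    (h : fderiv ℝ (fun q => c q • N q) p = φ • ContinuousLinearMap.id ℝ (E (n + 2)))
    (hvξ : eta v (ξ p) = 0) (hvN : eta v (N p) = 0) :
    AN ξ N p v = (-(φ / c p)) • v :=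
  neg_sproj_fderiv_eq_smul_of_fderiv_smul_eq_smul_id hc hN hc0 h
    (sproj_right_eq_zero hNN hξN) hvξ hvN

end Minkowski

theorem cc_field_radical_or_transversal_umbilical_general {n : ℕ}
    (U : Set (E (n + 2)))
    (ξ N : E (n + 2) → E (n + 2)) (c φ : E (n + 2) → ℝ)
    (hξd : ∀ p ∈ U, DifferentiableAt ℝ ξ p)
    (hNd : ∀ p ∈ U, DifferentiableAt ℝ N p)
    (hcd : ∀ p ∈ U, DifferentiableAt ℝ c p)
    (hc0 : ∀ p ∈ U, c p ≠ 0)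
    (hξξ : ∀ p ∈ U, eta (ξ p) (ξ p) = 0)
    (hNN : ∀ p ∈ U, eta (N p) (N p) = 0)
    (hξN : ∀ p ∈ U, eta (ξ p) (N p) = 1) :
    ((∀ p ∈ U, fderiv ℝ (fun q => c q • ξ q) p = φ p • ContinuousLinearMap.id ℝ (E (n + 2))) →
      (∀ p ∈ U, ∀ v : E (n + 2), eta v (ξ p) = 0 → eta v (N p) = 0 →
        Astar ξ N p v = (-(φ p / c p)) • v) ∧
      ((∀ p ∈ U, φ p = 0) → ∀ p ∈ U, ∀ v : E (n + 2), eta v (ξ p) = 0 → eta v (N p) = 0 →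
        Astar ξ N p v = 0)) ∧
    ((∀ p ∈ U, fderiv ℝ (fun q => c q • N q) p = φ p • ContinuousLinearMap.id ℝ (E (n + 2))) →
      (∀ p ∈ U, ∀ v : E (n + 2), eta v (ξ p) = 0 → eta v (N p) = 0 →
        AN ξ N p v = (-(φ p / c p)) • v) ∧
      ((∀ p ∈ U, φ p = 0) → ∀ p ∈ U, ∀ v : E (n + 2), eta v (ξ p) = 0 → eta v (N p) = 0 →
        AN ξ N p v = 0)) := by
  refine ⟨fun hZ => ?_, fun hZ => ?_⟩
  · have umbilical p (hp : p ∈ U) v (hvξ : eta v (ξ p) = 0) (hvN : eta v (N p) = 0) :=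
      Astar_eq_smul_of_fderiv_smul_eq_smul_id (hcd p hp) (hξd p hp) (hc0 p hp) (hξξ p hp)
        (hξN p hp) (hZ p hp) hvξ hvN
    exact ⟨umbilical, fun hφ p hp v hvξ hvN => by simp [umbilical p hp v hvξ hvN, hφ p hp]⟩
  · have umbilical p (hp : p ∈ U) v (hvξ : eta v (ξ p) = 0) (hvN : eta v (N p) = 0) :=
      AN_eq_smul_of_fderiv_smul_eq_smul_id (hcd p hp) (hNd p hp) (hc0 p hp) (hNN p hp)
        (hξN p hp) (hZ p hp) hvξ hvN
    exact ⟨umbilical, fun hφ p hp v hvξ hvN => by simp [umbilical p hp v hvξ hvN, hφ p hp]⟩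

/-- If a closed conformal field lies in the radical direction then the null
hypersurface is totally umbilical (totally geodesic when the field is parallel); if it lies
in the transversal direction then the screen distribution is totally umbilical (resp. totally
geodesic) (flat Minkowski ambient form). -/
theorem cc_field_radical_or_transversal_umbilical {n : ℕ}
    (U : Set (E (n + 2))) (hU : IsOpen U)
    (ξ N : E (n + 2) → E (n + 2)) (c φ : E (n + 2) → ℝ)
    (hξd : ∀ p ∈ U, DifferentiableAt ℝ ξ p)
    (hNd : ∀ p ∈ U, DifferentiableAt ℝ N p)
    (hcd : ∀ p ∈ U, DifferentiableAt ℝ c p)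
    (hc0 : ∀ p ∈ U, c p ≠ 0)
    (hξξ : ∀ p ∈ U, eta (ξ p) (ξ p) = 0)
    (hNN : ∀ p ∈ U, eta (N p) (N p) = 0)
    (hξN : ∀ p ∈ U, eta (ξ p) (N p) = 1) :
    ((∀ p ∈ U, fderiv ℝ (fun q => c q • ξ q) p = φ p • ContinuousLinearMap.id ℝ (E (n + 2))) →
      (∀ p ∈ U, ∀ v : E (n + 2), eta v (ξ p) = 0 → eta v (N p) = 0 →
        Astar ξ N p v = (-(φ p / c p)) • v) ∧
      ((∀ p ∈ U, φ p = 0) → ∀ p ∈ U, ∀ v : E (n + 2), eta v (ξ p) = 0 → eta v (N p) = 0 →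
        Astar ξ N p v = 0)) ∧
    ((∀ p ∈ U, fderiv ℝ (fun q => c q • N q) p = φ p • ContinuousLinearMap.id ℝ (E (n + 2))) →
      (∀ p ∈ U, ∀ v : E (n + 2), eta v (ξ p) = 0 → eta v (N p) = 0 →
        AN ξ N p v = (-(φ p / c p)) • v) ∧
      ((∀ p ∈ U, φ p = 0) → ∀ p ∈ U, ∀ v : E (n + 2), eta v (ξ p) = 0 → eta v (N p) = 0 →
        AN ξ N p v = 0)) :=
  cc_field_radical_or_transversal_umbilical_general U ξ N c φ hξd hNd hcd hc0 hξξ hNN hξN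

end
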